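/- Let n ≥ 4, let r_1 ∈ [n], and let σ be an even permutation of {0,1}^n. Then there exist at least n−2 different indices r_2 ∈ [n]\{r_1} for which there exist σ_1 ∈ AC^{(r_1)} and π_1, π_2 ∈ AC^{(r_2)} such that σ ∘ π_1 ∘ σ_1 ∘ π_2 ∈ A^{(r_1)}. -/

import Mathlib

open Equiv

/-- `x` with its `i`-th bit flipped. -/
def flipBit {n : ℕ} (i : Fin n) (x : Fin n → Bool) : Fin n → Bool :=
  Function.update x i (!x i)

/-- `SC i`: the set of `i`-concurrent controlled permutations (`i`-CCRBFs) of
the hypercube `{0,1}^n`: the `i`-th bit of every point is preserved, and the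
action on all other bits does not depend on the `i`-th bit. -/
def SC {n : ℕ} (i : Fin n) : Set (Perm (Fin n → Bool)) :=
  {σ | (∀ x, σ x i = x i) ∧ ∀ x, ∀ k, k ≠ i → σ x k = σ (flipBit i x) k}

/-- `AC i`: the set of concurrently even `i`-CCRBFs: those `σ ∈ SC i` whose
induced permutation of the face `{x | x i = false}` is even. -/
def AC {n : ℕ} (i : Fin n) : Set (Perm (Fin n → Bool)) :=
  {σ | σ ∈ SC i ∧ ∃ h : ∀ x : Fin n → Bool, x i = false ↔ σ x i = false,
    Perm.sign (σ.subtypePerm (p := fun x => x i = false) (fun x => (h x).symm)) = 1}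

/-!
Put `f x := !σ x i`; then `σ * π₁ * σ₁ * π₂` fixes bit `i` exactly when `π₁ σ₁ π₂` maps the face
`{x | x i = false}` onto `{x | f x}`, a set of size `2 ^ (n - 1)`. Fix `j ≠ i` and write points
as `(x i, x j, z)`. Each `j`-edge `{x, flipBit j x}` has a type in `Bool × Bool`, recording which
of its endpoints satisfy `f`; the types `(t, t), (t, f), (f, t), (f, f)` occur `s, n₀, n₁, s`
times. An element of `AC j` permutes the `j`-edges evenly and otherwise freely, so `π₁` can match
any two sets with the same type counts. The face can be mapped by some `σ₁ π₂` onto any set given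
by `2 × 2` Boolean matrices, one for each `z`, whose columns occur in equal pairs; the rows of the
matrices are the types of the `j`-edges of that set. Matrices with `s, n₀, n₁, s` rows of each
type are found by a case analysis on the parities of `s` and `n₀`, unless `s = 0` and `n₀` is
odd, or `s = 1` and `n₀ n₁ = 0`.

At most one direction `j` is that bad. If `s = 0`, the complement of `{x | f x}` is its
`flipBit j`-image, so every other bit splits `{x | f x}` evenly, into halves of size
`2 ^ (n - 2) ≥ 4`. This excludes a second bad direction, except when both have `s = 1`: then
`{x | f x}` has only one point on a face of each of the two directions, so it has at most
`2 + 2 ^ (n - 2) < 2 ^ (n - 1)` points.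
-/

open Finset

section Fibers

variable {α β κ : Type*} [Fintype α] [Fintype β] [DecidableEq κ]

theorem exists_equiv_comp_eq_of_card_fiber (f : α → κ) (g : β → κ)
    (h : ∀ v, #{a | f a = v} = #{b | g b = v}) : ∃ e : α ≃ β, ∀ a, g (e a) = f a :=
  ⟨ofFiberEquiv fun v => Fintype.equivOfCardEq (by simpa [Fintype.card_subtype] using h v),
    ofFiberEquiv_map _⟩

theorem exists_perm_sign_eq_one_comp_eq [DecidableEq α] [Fintype κ] (f g : α → κ)
    (h : ∀ v, #{a | f a = v} = #{a | g a = v}) (hκ : Fintype.card κ < Fintype.card α) :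
    ∃ e : Perm α, Perm.sign e = 1 ∧ ∀ a, g (e a) = f a := by
  obtain ⟨e, he⟩ := exists_equiv_comp_eq_of_card_fiber f g h
  obtain ⟨a₁, a₂, hne, hf⟩ := Fintype.exists_ne_map_eq_of_card_lt f hκ
  rcases Int.units_eq_one_or (Perm.sign e) with hs | hs
  · exact ⟨e, hs, he⟩
  · refine ⟨e * swap a₁ a₂, by simp [hs, hne], fun a => ?_⟩
    rw [Perm.mul_apply, he, swap_apply_def]
    split_ifs <;> simp_all

theorem exists_card_fiber_eq [Fintype κ] (d : κ → ℕ) (h : ∑ v, d v = Fintype.card α) :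
    ∃ f : α → κ, ∀ v, #{a | f a = v} = d v := by
  let e : α ≃ Σ v, Fin (d v) := Fintype.equivOfCardEq (by simp [h])
  refine ⟨fun a => (e a).1, fun v => ?_⟩
  rw [← Fintype.card_subtype,
    Fintype.card_congr ((e.subtypeEquiv fun a => Iff.rfl).trans (sigmaSubtype v))]
  simp

theorem sum_comp_eq_sum_card_fiber_mul [Fintype κ] (g : α → κ) (φ : κ → ℕ) :
    ∑ a, φ (g a) = ∑ v, #{a | g a = v} * φ v := by
  rw [← sum_fiberwise' univ g φ]
  simp [sum_const]

theorem card_fiber_eq_of_card_true_eq {f g : α → Bool}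
    (h : #{a | f a = true} = #{a | g a = true}) (v : Bool) :
    #{a | f a = v} = #{a | g a = v} := by
  have hf := card_filter_add_card_filter_not (s := univ) (fun a => f a = true)
  have hg := card_filter_add_card_filter_not (s := univ) (fun a => g a = true)
  cases v <;> simp only [Bool.not_eq_true] at hf hg <;> omega

theorem card_filter_bool (P : Bool → Prop) [DecidablePred P] :
    #{a | P a} = (if P false then 1 else 0) + (if P true then 1 else 0) := by
  rw [card_filter, Fintype.sum_bool, add_comm]

theorem card_filter_bool_prod (P : Bool × β → Prop) [DecidablePred P] :
    #{c | P c} = ∑ z, #{a | P (a, z)} := by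
  simp only [card_filter]
  exact Fintype.sum_prod_type_right _

theorem card_filter_bool_prod_snd (P : β → Prop) [DecidablePred P] :
    #{c : Bool × β | P c.2} = 2 * #{z | P z} := by
  rw [card_filter_bool_prod, card_filter, mul_sum]
  refine sum_congr rfl fun z _ => ?_
  by_cases h : P z <;> simp [h]

theorem exists_card_fiber_comp_snd_eq [Fintype κ] (f : Bool × β → κ)
    (hf : ∀ v, Even #{c | f c = v}) :
    ∃ t : β → κ, ∀ v, #{c : Bool × β | t c.2 = v} = #{c | f c = v} := by
  choose d hd using hf
  have htot : ∑ v, #{c | f c = v} = 2 * Fintype.card β := by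
    rw [← card_eq_sum_card_fiberwise (fun c _ => mem_univ (f c))]
    simp [two_mul]
  obtain ⟨t, ht⟩ := exists_card_fiber_eq (α := β) d
    (by simp only [hd, sum_add_distrib] at htot; omega)
  exact ⟨t, fun v => by rw [card_filter_bool_prod_snd (fun z => t z = v), ht, hd, two_mul]⟩

end Fibers

def pick {α : Type*} (b : Bool) (p : α × α) : α := cond b p.2 p.1

@[simp] theorem pick_false {α : Type*} (p : α × α) : pick false p = p.1 := rfl

@[simp] theorem pick_true {α : Type*} (p : α × α) : pick true p = p.2 := rfl

def countTrue (p : Bool × Bool) : ℕ := #{a | pick a p = true}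

/-- A `2 × 2` Boolean matrix with rows `M.1`, `M.2`; its entry `(a, b)` is `pick b (pick a M)`. -/
abbrev Pattern := (Bool × Bool) × (Bool × Bool)

def Pattern.col (b : Bool) (M : Pattern) : Bool × Bool := (pick b M.1, pick b M.2)

theorem pick_pick_eq_pick_col (a b : Bool) (M : Pattern) :
    pick b (pick a M) = pick a (M.col b) := by
  cases a <;> rfl

def rowCount (L : List Pattern) (r : Bool × Bool) : ℕ :=
  (L.map fun M => #{a | pick a M = r}).sum

def colCount (L : List Pattern) (p : Bool × Bool) : ℕ :=
  (L.map fun M => #{b | M.col b = p}).sum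

theorem sum_rowCount (L : List Pattern) : ∑ r, rowCount L r = 2 * L.length := by
  induction L with
  | nil => simp [rowCount]
  | cons M L ih =>
    simp only [rowCount, List.map_cons, List.sum_cons, sum_add_distrib] at ih ⊢
    rw [ih, (by decide : ∀ M : Pattern, ∑ r, #{a | pick a M = r} = 2) M, List.length_cons]
    ring

def profile (s n₀ n₁ : ℕ) : Bool × Bool → ℕ
  | (true, false) => n₀
  | (false, true) => n₁
  | _ => s

theorem length_eq_of_rowCount_eq_profile {L : List Pattern} {m s n₀ n₁ : ℕ}
    (hrow : rowCount L = profile s n₀ n₁) (hsum : 2 * s + n₀ + n₁ = 2 * m) : L.length = m := by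
  have := sum_rowCount L
  simp [hrow, Fintype.sum_prod_type, profile] at this
  omega

def IsBadProfile (s n₀ n₁ : ℕ) : Prop :=
  (s = 0 ∧ Odd n₀) ∨ (s = 1 ∧ (n₀ = 0 ∨ n₁ = 0))

/- The padding matrices have the columns `(t, f), (t, f)`, resp. `(t, t), (f, f)`, so they change
the column parities only at `(t, t)` and `(f, f)`, by `y + w`. -/
theorem exists_patterns_of_seed (S : List Pattern) (sS aS bS c x y w : ℕ) {s n₀ n₁ : ℕ}
    (hrow : rowCount S = profile sS aS bS)
    (hcol : ∀ p, colCount S p % 2 = if p.1 = p.2 then c else 0)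
    (hs : sS + x = s) (h₀ : aS + 2 * y = n₀) (h₁ : bS + 2 * w = n₁)
    (hc : (c + y + w) % 2 = 0) :
    ∃ L, rowCount L = profile s n₀ n₁ ∧ ∀ p, Even (colCount L p) := by
  refine ⟨S ++ List.replicate x ((true, true), (false, false))
    ++ List.replicate y ((true, false), (true, false))
    ++ List.replicate w ((false, true), (false, true)), funext fun r => ?_, fun p => ?_⟩
  · have := congrFun hrow r
    rcases r with ⟨_ | _, _ | _⟩ <;>
      simp [rowCount, profile, card_filter_bool, -Fintype.univ_bool] at this ⊢ <;> omega
  · have := hcol p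
    rw [Nat.even_iff]
    rcases p with ⟨_ | _, _ | _⟩ <;>
      simp [colCount, Pattern.col, card_filter_bool, -Fintype.univ_bool] at this ⊢ <;> omega

theorem exists_patterns {m s n₀ n₁ : ℕ} (hm : 4 ≤ m) (hme : Even m)
    (hsum : 2 * s + n₀ + n₁ = 2 * m) (hgood : ¬ IsBadProfile s n₀ n₁) :
    ∃ L : List Pattern, L.length = m ∧ rowCount L = profile s n₀ n₁ ∧
      ∀ p, Even (colCount L p) := by
  suffices ∃ L, rowCount L = profile s n₀ n₁ ∧ ∀ p, Even (colCount L p) by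
    obtain ⟨L, hrow, hcol⟩ := this
    exact ⟨L, length_eq_of_rowCount_eq_profile hrow hsum, hrow, hcol⟩
  simp only [IsBadProfile, Nat.odd_iff, not_or, not_and] at hgood
  rw [Nat.even_iff] at hme
  obtain hs | hs := Nat.even_or_odd s <;> obtain h₀ | h₀ := Nat.even_or_odd n₀ <;>
    simp only [Nat.even_iff, Nat.odd_iff] at hs h₀
  · exact exists_patterns_of_seed [] 0 0 0 0 s (n₀ / 2) (n₁ / 2)
      (by decide) (by decide) (by omega) (by omega) (by omega) (by omega)
  · exact exists_patterns_of_seed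
      [((true, true), (true, false)), ((false, true), (false, false))]
      1 1 1 1 (s - 1) (n₀ / 2) (n₁ / 2) (by decide) (by decide)
      (by omega) (by omega) (by omega) (by omega)
  · rcases Nat.eq_zero_or_pos n₀ with h0 | h0
    · exact exists_patterns_of_seed
        [((true, true), (true, true)), ((false, true), (false, false)),
          ((false, true), (false, false))]
        2 0 2 0 (s - 2) 0 (n₁ / 2 - 1) (by decide) (by decide)
        (by omega) (by omega) (by omega) (by omega)
    rcases Nat.eq_zero_or_pos n₁ with h1 | h1
    · exact exists_patterns_of_seed
        [((true, true), (true, true)), ((true, false), (false, false)),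
          ((true, false), (false, false))]
        2 2 0 0 (s - 2) (n₀ / 2 - 1) 0 (by decide) (by decide)
        (by omega) (by omega) (by omega) (by omega)
    · exact exists_patterns_of_seed
        [((true, true), (true, false)), ((true, false), (false, true)),
          ((false, false), (false, true))]
        1 2 2 1 (s - 1) (n₀ / 2 - 1) (n₁ / 2 - 1) (by decide) (by decide)
        (by omega) (by omega) (by omega) (by omega)
  · rcases Nat.lt_or_ge 1 s with h1 | h1
    · exact exists_patterns_of_seed
        [((true, true), (true, true)), ((true, false), (false, false)),
          ((false, true), (false, false))]
        2 1 1 0 (s - 2) (n₀ / 2) (n₁ / 2) (by decide) (by decide)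
        (by omega) (by omega) (by omega) (by omega)
    rcases Nat.lt_or_ge 1 n₀ with h0 | h0
    · exact exists_patterns_of_seed
        [((true, true), (true, false)), ((true, false), (false, true)),
          ((false, false), (true, false))]
        1 3 1 1 0 (n₀ / 2 - 1) (n₁ / 2) (by decide) (by decide)
        (by omega) (by omega) (by omega) (by omega)
    · exact exists_patterns_of_seed
        [((true, true), (false, true)), ((true, false), (false, true)),
          ((false, false), (false, true))]
        1 1 3 1 0 (n₀ / 2) (n₁ / 2 - 1) (by decide) (by decide)
        (by omega) (by omega) (by omega) (by omega)

section DoublePerm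

variable {α Y : Type*}

def doublePerm (Ψ : α ≃ Bool × Y) (e : Perm Y) : Perm α :=
  Ψ.symm.permCongr (prodCongrRight fun _ => e)

theorem doublePerm_apply (Ψ : α ≃ Bool × Y) (e : Perm Y) (x : α) :
    Ψ (doublePerm Ψ e x) = ((Ψ x).1, e (Ψ x).2) := by
  rw [doublePerm, permCongr_apply, symm_symm, apply_symm_apply]
  rfl

theorem doublePerm_trans_apply {β : Type*} (Φ : α ≃ β) (Ψ : β ≃ Bool × Y) (e : Perm Y)
    (x : α) : Φ (doublePerm (Φ.trans Ψ) e x) = doublePerm Ψ e (Φ x) := by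
  simp [doublePerm, permCongr_apply]

theorem sign_doublePerm [Fintype α] [DecidableEq α] [Fintype Y] [DecidableEq Y]
    (Ψ : α ≃ Bool × Y) (e : Perm Y) : Perm.sign (doublePerm Ψ e) = 1 := by
  rw [doublePerm, Perm.sign_permCongr, Perm.sign_prodCongrRight, Fintype.prod_bool]
  exact Int.units_mul_self _

end DoublePerm

section Model

variable {Z : Type*}

/- The model of the cube is `Bool × Bool × Z`, a point `(a, b, z)` standing for `x i = a`,
`x j = b` and the other bits `z`; `fixFst` and `fixMid` play the roles of `AC i` and `AC j`. -/
def fixFst (h : Perm (Bool × Z)) : Perm (Bool × Bool × Z) := prodCongrRight fun _ => h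

def swapFst : Bool × Bool × Z ≃ Bool × Bool × Z :=
  ⟨fun p => (p.2.1, p.1, p.2.2), fun p => (p.2.1, p.1, p.2.2), fun _ => rfl, fun _ => rfl⟩

def fixMid (e : Perm (Bool × Z)) : Perm (Bool × Bool × Z) := doublePerm swapFst e

@[simp] theorem fixFst_apply (h : Perm (Bool × Z)) (p : Bool × Bool × Z) :
    fixFst h p = (p.1, h p.2) := rfl

@[simp] theorem fixMid_apply (e : Perm (Bool × Z)) (p : Bool × Bool × Z) :
    fixMid e p = ((e (p.1, p.2.2)).1, p.2.1, (e (p.1, p.2.2)).2) := rfl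

def cellType (F : Bool × Bool × Z → Bool) (c : Bool × Z) : Bool × Bool :=
  (F (c.1, false, c.2), F (c.1, true, c.2))

def patternIndicator (G : Z → Pattern) (p : Bool × Bool × Z) : Bool :=
  pick p.2.1 (pick p.1 (G p.2.2))

variable [Fintype Z]

theorem exists_fun_rowCount_colCount (L : List Pattern) (hL : L.length = Fintype.card Z) :
    ∃ G : Z → Pattern, (∀ r, #{c : Bool × Z | pick c.1 (G c.2) = r} = rowCount L r) ∧
      ∀ p, #{c : Bool × Z | (G c.2).col c.1 = p} = colCount L p := by
  let e : Z ≃ Fin L.length := Fintype.equivFinOfCardEq hL.symm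
  refine ⟨fun z => L[e z], fun r => ?_, fun p => ?_⟩
  · rw [card_filter_bool_prod, rowCount, ← Fin.sum_univ_fun_getElem]
    exact e.sum_comp fun k => #{a | pick a L[k.1] = r}
  · rw [card_filter_bool_prod, colCount, ← Fin.sum_univ_fun_getElem]
    exact e.sum_comp fun k => #{b | L[k.1].col b = p}

theorem sum_countTrue_eq_card {s n₀ n₁ : ℕ} (G : Z → Pattern) (t : Z → Bool × Bool)
    (hrow : ∀ r, #{c : Bool × Z | pick c.1 (G c.2) = r} = profile s n₀ n₁ r)
    (hsum : 2 * s + n₀ + n₁ = 2 * Fintype.card Z)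
    (ht : ∀ v, #{c : Bool × Z | t c.2 = v} = #{c : Bool × Z | (G c.2).col c.1 = v}) :
    ∑ z, countTrue (t z) = Fintype.card Z := by
  suffices 2 * ∑ z, countTrue (t z) = 2 * Fintype.card Z by omega
  calc 2 * ∑ z, countTrue (t z)
      = ∑ c : Bool × Z, countTrue (t c.2) := by
        simp [Fintype.sum_prod_type_right, two_mul, sum_add_distrib]
    _ = ∑ c : Bool × Z, countTrue ((G c.2).col c.1) := by
        simp_rw [sum_comp_eq_sum_card_fiber_mul _ countTrue, ht]
    _ = ∑ c : Bool × Z, countTrue (pick c.1 (G c.2)) := by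
        simp only [Fintype.sum_prod_type_right]
        refine sum_congr rfl fun z _ => ?_
        exact (by decide : ∀ M : Pattern,
          ∑ b, countTrue (M.col b) = ∑ a, countTrue (pick a M)) (G z)
    _ = 2 * Fintype.card Z := by
        rw [sum_comp_eq_sum_card_fiber_mul]
        simp_rw [hrow]
        simp [Fintype.sum_prod_type, Fintype.sum_bool, profile, countTrue, card_filter_bool,
          -Fintype.univ_bool]
        omega

variable [DecidableEq Z]

theorem exists_fixMid_comp_eq (F D : Bool × Bool × Z → Bool)
    (h : ∀ r, #{c | cellType D c = r} = #{c | cellType F c = r}) (hZ : 3 ≤ Fintype.card Z) :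
    ∃ e : Perm (Bool × Z), Perm.sign e = 1 ∧ ∀ p, F (fixMid e p) = D p := by
  obtain ⟨e, he, hFD⟩ := exists_perm_sign_eq_one_comp_eq (cellType D) (cellType F) h
    (by simp; omega)
  refine ⟨e, he, fun ⟨a, b, z⟩ => ?_⟩
  have := congrArg (pick b) (hFD (a, z))
  cases b <;> simpa [cellType] using this

theorem exists_fixFst_fixMid {s n₀ n₁ : ℕ} (G : Z → Pattern)
    (hrow : ∀ r, #{c : Bool × Z | pick c.1 (G c.2) = r} = profile s n₀ n₁ r)
    (hsum : 2 * s + n₀ + n₁ = 2 * Fintype.card Z)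
    (hcol : ∀ p, Even #{c : Bool × Z | (G c.2).col c.1 = p}) (hZ : 3 ≤ Fintype.card Z) :
    ∃ h e : Perm (Bool × Z), Perm.sign h = 1 ∧ Perm.sign e = 1 ∧
      ∀ p, patternIndicator G (fixFst h (fixMid e p)) = !p.1 := by
  obtain ⟨t, ht⟩ := exists_card_fiber_comp_snd_eq _ hcol
  obtain ⟨h, hh, hGt⟩ := exists_perm_sign_eq_one_comp_eq (fun c : Bool × Z => t c.2)
    (fun c => (G c.2).col c.1) ht (by simp; omega)
  -- `e` has to map the face `a = false` onto `{(a, z) | pick a (t z)}`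
  have htrue : #{c : Bool × Z | (!c.1) = true} = #{c : Bool × Z | pick c.1 (t c.2) = true} := by
    rw [card_filter_bool_prod, card_filter_bool_prod]
    simpa [countTrue, card_filter_bool, -Fintype.univ_bool] using
      (sum_countTrue_eq_card G t hrow hsum ht).symm
  obtain ⟨e, he, hte⟩ := exists_perm_sign_eq_one_comp_eq (fun c : Bool × Z => !c.1)
    (fun c => pick c.1 (t c.2)) (card_fiber_eq_of_card_true_eq htrue) (by simp; omega)
  refine ⟨h, e, hh, he, fun p => ?_⟩
  calc patternIndicator G (fixFst h (fixMid e p))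
      = pick (e (p.1, p.2.2)).1 ((G (h (p.2.1, (e (p.1, p.2.2)).2)).2).col
          (h (p.2.1, (e (p.1, p.2.2)).2)).1) := pick_pick_eq_pick_col ..
    _ = pick (e (p.1, p.2.2)).1 (t (e (p.1, p.2.2)).2) := by rw [hGt]
    _ = !p.1 := hte _

theorem exists_fixMid_fixFst_fixMid (F : Bool × Bool × Z → Bool) {s n₀ n₁ : ℕ}
    (hF : ∀ r, #{c | cellType F c = r} = profile s n₀ n₁ r)
    (hsum : 2 * s + n₀ + n₁ = 2 * Fintype.card Z) (hZ : 4 ≤ Fintype.card Z)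
    (hZe : Even (Fintype.card Z)) (hgood : ¬ IsBadProfile s n₀ n₁) :
    ∃ e₁ h e₂ : Perm (Bool × Z),
      Perm.sign e₁ = 1 ∧ Perm.sign h = 1 ∧ Perm.sign e₂ = 1 ∧
        ∀ p, F (fixMid e₁ (fixFst h (fixMid e₂ p))) = !p.1 := by
  obtain ⟨L, hL, hrow, hcol⟩ := exists_patterns hZ hZe hsum hgood
  obtain ⟨G, hGrow, hGcol⟩ := exists_fun_rowCount_colCount L hL
  obtain ⟨h, e₂, hh, he₂, hG⟩ := exists_fixFst_fixMid G (fun r => by rw [hGrow, hrow]) hsum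
    (fun p => hGcol p ▸ hcol p) (by omega)
  obtain ⟨e₁, he₁, hFG⟩ := exists_fixMid_comp_eq F (patternIndicator G)
    (fun r => (hGrow r).trans ((congrFun hrow r).trans (hF r).symm)) (by omega)
  exact ⟨e₁, h, e₂, he₁, hh, he₂, fun p => (hFG _).trans (hG p)⟩

end Model

section Hypercube

variable {n : ℕ}

@[simp] theorem flipBit_apply_self (k : Fin n) (x : Fin n → Bool) : flipBit k x k = !x k :=
  Function.update_self ..

theorem flipBit_apply_of_ne {k l : Fin n} (h : l ≠ k) (x : Fin n → Bool) :
    flipBit k x l = x l :=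
  Function.update_of_ne h ..

@[simp] theorem flipBit_flipBit (k : Fin n) (x : Fin n → Bool) :
    flipBit k (flipBit k x) = x := by
  simp [flipBit]

theorem doublePerm_mem_AC {Y : Type*} [Fintype Y] [DecidableEq Y] {k : Fin n}
    (Ψ : (Fin n → Bool) ≃ Bool × Y) (hΨ : ∀ x, (Ψ x).1 = x k)
    (hflip : ∀ x, Ψ (flipBit k x) = (!x k, (Ψ x).2)) (e : Perm Y) (he : Perm.sign e = 1) :
    doublePerm Ψ e ∈ AC k := by
  have hk : ∀ x, doublePerm Ψ e x k = x k := fun x => by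
    rw [← hΨ (doublePerm Ψ e x), doublePerm_apply, hΨ]
  have hcomm : ∀ x, doublePerm Ψ e (flipBit k x) = flipBit k (doublePerm Ψ e x) := fun x =>
    Ψ.injective (by rw [doublePerm_apply, hflip, hflip, doublePerm_apply, hk])
  refine ⟨⟨hk, fun x l hl => by rw [hcomm, flipBit_apply_of_ne hl]⟩,
    fun x => by rw [hk], ?_⟩
  let E : {x : Fin n → Bool // x k = false} ≃ Y :=
    { toFun x := (Ψ x).2
      invFun y := ⟨Ψ.symm (false, y), by rw [← hΨ (Ψ.symm _), Equiv.apply_symm_apply]⟩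
      left_inv x := Subtype.ext (Ψ.symm_apply_eq.2 (Prod.ext (by rw [hΨ, x.2]) rfl))
      right_inv y := by simp }
  have : (doublePerm Ψ e).subtypePerm (p := fun x => x k = false) (fun x => by rw [hk])
      = E.symm.permCongr e := by
    refine Equiv.ext fun w => Subtype.ext ?_
    change doublePerm Ψ e w = Ψ.symm (false, e (Ψ w).2)
    rw [Ψ.eq_symm_apply, doublePerm_apply, hΨ, w.2]
  rw [this, Perm.sign_permCongr, he]

def splitBits (i j : Fin n) (hij : i ≠ j) :
    (Fin n → Bool) ≃ Bool × Bool × ({k // k ≠ i ∧ k ≠ j} → Bool) where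
  toFun x := (x i, x j, fun k => x k)
  invFun p k := if hi : k = i then p.1 else if hj : k = j then p.2.1 else p.2.2 ⟨k, hi, hj⟩
  left_inv x := by
    funext k
    dsimp only
    split_ifs <;> simp_all
  right_inv := by
    rintro ⟨a, b, z⟩
    refine Prod.ext (dif_pos rfl) (Prod.ext ?_ (funext fun k => ?_))
    · simp [hij.symm]
    · simp [k.2.1, k.2.2]

variable {i j : Fin n} (hij : i ≠ j)

theorem splitBits_flipBit_left (x : Fin n → Bool) :
    splitBits i j hij (flipBit i x) = (!x i, (splitBits i j hij x).2) := by
  simp only [splitBits, Equiv.coe_fn_mk, flipBit_apply_self, flipBit_apply_of_ne hij.symm]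
  congr
  funext k
  exact flipBit_apply_of_ne k.2.1 x

theorem splitBits_flipBit_right (x : Fin n → Bool) :
    splitBits i j hij (flipBit j x) = (x i, !x j, (splitBits i j hij x).2.2) := by
  simp only [splitBits, Equiv.coe_fn_mk, flipBit_apply_self, flipBit_apply_of_ne hij]
  congr
  funext k
  exact flipBit_apply_of_ne k.2.2 x

theorem splitBits_symm_apply_left (p : Bool × Bool × ({k // k ≠ i ∧ k ≠ j} → Bool)) :
    (splitBits i j hij).symm p i = p.1 :=
  congrArg Prod.fst ((splitBits i j hij).apply_symm_apply p)

theorem splitBits_symm_apply_right (p : Bool × Bool × ({k // k ≠ i ∧ k ≠ j} → Bool)) :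
    (splitBits i j hij).symm p j = p.2.1 :=
  congrArg (fun q => q.2.1) ((splitBits i j hij).apply_symm_apply p)

theorem flipBit_splitBits_symm (p : Bool × Bool × ({k // k ≠ i ∧ k ≠ j} → Bool)) :
    flipBit j ((splitBits i j hij).symm p) = (splitBits i j hij).symm (p.1, !p.2.1, p.2.2) := by
  rw [Equiv.eq_symm_apply, splitBits_flipBit_right, splitBits_symm_apply_left,
    splitBits_symm_apply_right, apply_symm_apply]

end Hypercube

section BadDirections

variable {n : ℕ}

theorem two_mul_card_filter_and_of_flipBit (k : Fin n) (P Q : (Fin n → Bool) → Prop)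
    [DecidablePred P] [DecidablePred Q] (hP : ∀ x, P (flipBit k x) ↔ P x)
    (hQ : ∀ x, Q (flipBit k x) ↔ ¬ Q x) : 2 * #{x | P x ∧ Q x} = #{x | P x} := by
  have hflip : #{x | P x ∧ Q x} = #{x | P x ∧ ¬ Q x} :=
    card_nbij' (flipBit k) (flipBit k) (fun x hx => by simp_all) (fun x hx => by simp_all)
      (fun x _ => flipBit_flipBit k x) (fun x _ => flipBit_flipBit k x)
  have hsplit := card_filter_add_card_filter_not (s := filter P univ) Q
  rw [filter_filter, filter_filter] at hsplit
  rw [two_mul, ← hsplit]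
  exact congrArg _ hflip

theorem two_mul_card_bit (k : Fin n) (b : Bool) :
    2 * #{x : Fin n → Bool | x k = b} = 2 ^ n := by
  simpa using two_mul_card_filter_and_of_flipBit k (fun _ => True) (fun x => x k = b)
    (fun _ => Iff.rfl) (fun x => by rw [flipBit_apply_self]; cases x k <;> simp)

theorem four_mul_card_bit_bit {k l : Fin n} (hkl : k ≠ l) (b c : Bool) :
    4 * #{x : Fin n → Bool | x k = b ∧ x l = c} = 2 ^ n := by
  have := two_mul_card_filter_and_of_flipBit l (fun x => x k = b) (fun x => x l = c)
    (fun x => by rw [flipBit_apply_of_ne hkl])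
    (fun x => by rw [flipBit_apply_self]; cases x l <;> simp)
  have := two_mul_card_bit k b
  omega

theorem two_mul_card_not_apply (σ : Perm (Fin n → Bool)) (i : Fin n) :
    2 * #{x | (!σ x i) = true} = 2 ^ n := by
  rw [← two_mul_card_bit i false]
  congr 1
  exact card_nbij' σ σ.symm (fun x hx => by simpa using hx) (fun x hx => by simpa using hx)
    (fun x _ => by simp) (fun x _ => by simp)

def edgeProfile (f : (Fin n → Bool) → Bool) (j : Fin n) (r : Bool × Bool) : ℕ :=
  #{x | x j = false ∧ (f x, f (flipBit j x)) = r}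

def IsBadDirection (f : (Fin n → Bool) → Bool) (j : Fin n) : Prop :=
  IsBadProfile (edgeProfile f j (true, true)) (edgeProfile f j (true, false))
    (edgeProfile f j (false, true))

variable (f : (Fin n → Bool) → Bool) (j : Fin n)

theorem card_bit_false_and_eq : #{x | x j = false ∧ f x = true} =
    edgeProfile f j (true, true) + edgeProfile f j (true, false) := by
  rw [← card_filter_add_card_filter_not (fun x => f (flipBit j x) = true), filter_filter,
    filter_filter]
  congr 2 <;> ext x <;> simp [and_assoc]

theorem card_bit_true_and_eq : #{x | x j = true ∧ f x = true} =
    edgeProfile f j (true, true) + edgeProfile f j (false, true) := by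
  have : #{x | x j = true ∧ f x = true} = #{x | x j = false ∧ f (flipBit j x) = true} :=
    card_nbij' (flipBit j) (flipBit j) (fun x hx => by simp_all) (fun x hx => by simp_all)
      (fun x _ => flipBit_flipBit j x) (fun x _ => flipBit_flipBit j x)
  rw [this, ← card_filter_add_card_filter_not (fun x => f x = true), filter_filter,
    filter_filter]
  congr 2 <;> ext x <;> simp <;> tauto

theorem card_eq_edgeProfile : #{x | f x = true} = 2 * edgeProfile f j (true, true) +
    edgeProfile f j (true, false) + edgeProfile f j (false, true) := by
  have hsplit : #{x | f x = true} =
      #{x | x j = false ∧ f x = true} + #{x | x j = true ∧ f x = true} := by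
    rw [← card_filter_add_card_filter_not (s := filter _ univ) (fun x => x j = false),
      filter_filter, filter_filter]
    congr 2 <;> ext x <;> simp [and_comm]
  rw [hsplit, card_bit_false_and_eq, card_bit_true_and_eq]
  ring

theorem sum_edgeProfile : ∑ r, edgeProfile f j r = #{x : Fin n → Bool | x j = false} := by
  rw [card_eq_sum_card_fiberwise (f := fun x => (f x, f (flipBit j x))) (t := univ) (by simp)]
  simp only [filter_filter]
  rfl

variable {f}

theorem edgeProfile_false_false (hf : 2 * #{x | f x = true} = 2 ^ n) :
    edgeProfile f j (false, false) = edgeProfile f j (true, true) := by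
  have h₁ := card_eq_edgeProfile f j
  have h₂ := sum_edgeProfile f j
  have h₃ := two_mul_card_bit j false
  simp only [Fintype.sum_prod_type, Fintype.sum_bool] at h₂
  omega

theorem apply_flipBit_eq_not_of_edgeProfile (hf : 2 * #{x | f x = true} = 2 ^ n)
    (h₀ : edgeProfile f j (true, true) = 0) (x : Fin n → Bool) : f (flipBit j x) = !f x := by
  have h₀' := (edgeProfile_false_false j hf).trans h₀
  have hedge : ∀ y, y j = false → f (flipBit j y) = !f y := by
    intro y hy
    have htt := filter_eq_empty_iff.1 (card_eq_zero.1 h₀) (mem_univ y)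
    have hff := filter_eq_empty_iff.1 (card_eq_zero.1 h₀') (mem_univ y)
    revert htt hff
    cases f y <;> cases f (flipBit j y) <;> simp [hy]
  cases hx : x j
  · exact hedge x hx
  · have := hedge (flipBit j x) (by simp [hx])
    rw [flipBit_flipBit] at this
    rw [this, Bool.not_not]

theorem four_mul_card_bit_and_of_apply_flipBit (hanti : ∀ x, f (flipBit j x) = !f x)
    {k : Fin n} (hkj : k ≠ j) (β : Bool) : 4 * #{x | x k = β ∧ f x = true} = 2 ^ n := by
  have := two_mul_card_filter_and_of_flipBit j (fun x => x k = β) (fun x => f x = true)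
    (fun x => by rw [flipBit_apply_of_ne hkj]) (fun x => by rw [hanti]; cases f x <;> simp)
  have := two_mul_card_bit k β
  omega

theorem IsBadDirection.odd_or_card_eq_one (h : IsBadDirection f j) :
    (edgeProfile f j (true, true) = 0 ∧ Odd #{x | x j = false ∧ f x = true}) ∨
      ∃ β, #{x | x j = β ∧ f x = true} = 1 := by
  rcases h with ⟨h₀, hodd⟩ | ⟨h₁, h | h⟩
  · exact Or.inl ⟨h₀, by rwa [card_bit_false_and_eq, h₀, zero_add]⟩
  · exact Or.inr ⟨false, by rw [card_bit_false_and_eq, h₁, h]⟩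
  · exact Or.inr ⟨true, by rw [card_bit_true_and_eq, h₁, h]⟩

theorem eq_of_isBadDirection (hn : 4 ≤ n) (hf : 2 * #{x | f x = true} = 2 ^ n) {j j' : Fin n}
    (hj : IsBadDirection f j) (hj' : IsBadDirection f j') : j = j' := by
  by_contra hne
  have hpow : 2 ^ n = 16 * 2 ^ (n - 4) := by
    rw [← Nat.sub_add_cancel hn, pow_add, Nat.add_sub_cancel]; ring
  have hpos := Nat.one_le_two_pow (n := n - 4)
  rcases hj.odd_or_card_eq_one with ⟨h₀, hodd⟩ | ⟨β, hβ⟩ <;>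
    rcases hj'.odd_or_card_eq_one with ⟨h₀', -⟩ | ⟨β', hβ'⟩
  · have := four_mul_card_bit_and_of_apply_flipBit j'
      (apply_flipBit_eq_not_of_edgeProfile j' hf h₀') hne false
    rw [Nat.odd_iff] at hodd
    omega
  · have := four_mul_card_bit_and_of_apply_flipBit j
      (apply_flipBit_eq_not_of_edgeProfile j hf h₀) (Ne.symm hne) β'
    omega
  · have := four_mul_card_bit_and_of_apply_flipBit j'
      (apply_flipBit_eq_not_of_edgeProfile j' hf h₀') hne β
    omega
  · have hsub : filter (fun x => f x = true) univ ⊆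
        filter (fun x => x j = β ∧ f x = true) univ ∪
          filter (fun x => x j' = β' ∧ f x = true) univ ∪
          filter (fun x => x j = !β ∧ x j' = !β') univ := by
      intro x
      simp only [mem_filter, mem_univ, true_and, mem_union]
      cases β <;> cases β' <;> cases x j <;> cases x j' <;> simp
    have := (card_le_card hsub).trans
      ((card_union_le _ _).trans (Nat.add_le_add_right (card_union_le _ _) _))
    have := four_mul_card_bit_bit hne (!β) (!β')
    omega

end BadDirections

section GoodDirections

variable {n : ℕ} {i j : Fin n}

theorem card_cellType_eq_edgeProfile (hij : i ≠ j) (f : (Fin n → Bool) → Bool)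
    (r : Bool × Bool) :
    #{c | cellType (f ∘ (splitBits i j hij).symm) c = r} = edgeProfile f j r := by
  set Φ := splitBits i j hij
  have hΦ : ∀ x : Fin n → Bool, x j = false → Φ.symm ((Φ x).1, false, (Φ x).2.2) = x :=
    fun x hx => Φ.symm_apply_eq.2 (by rw [← hx]; rfl)
  refine card_nbij' (fun c => Φ.symm (c.1, false, c.2)) (fun x => ((Φ x).1, (Φ x).2.2))
    (fun c hc => ?_) (fun x hx => ?_) (fun c _ => by simp)
    (fun x hx => hΦ x (mem_filter.1 hx).2.1)
  · rw [mem_coe, mem_filter] at hc ⊢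
    refine ⟨mem_univ _, splitBits_symm_apply_right hij _, ?_⟩
    rw [flipBit_splitBits_symm]
    exact hc.2
  · rw [mem_coe, mem_filter] at hx ⊢
    refine ⟨mem_univ _, ?_⟩
    change (f (Φ.symm ((Φ x).1, false, (Φ x).2.2)),
      f (Φ.symm ((Φ x).1, !false, (Φ x).2.2))) = r
    rw [← flipBit_splitBits_symm hij ((Φ x).1, false, (Φ x).2.2), hΦ x hx.2.1]
    exact hx.2.2

theorem exists_mem_AC_of_not_isBadDirection (hn : 4 ≤ n) (hij : i ≠ j)
    (σ : Perm (Fin n → Bool)) (hgood : ¬ IsBadDirection (fun x => !σ x i) j) :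
    ∃ σ₁ ∈ AC i, ∃ π₁ ∈ AC j, ∃ π₂ ∈ AC j,
      Perm.sign (σ * π₁ * σ₁ * π₂) = Perm.sign σ ∧ ∀ x, (σ * π₁ * σ₁ * π₂) x i = x i := by
  set Φ := splitBits i j hij
  set f : (Fin n → Bool) → Bool := fun x => !σ x i
  have hf : 2 * #{x | f x = true} = 2 ^ n := two_mul_card_not_apply σ i
  have hZ : 4 * Fintype.card ({k // k ≠ i ∧ k ≠ j} → Bool) = 2 ^ n := by
    have := Fintype.card_congr Φ
    simp only [Fintype.card_prod, Fintype.card_bool, Fintype.card_fun, Fintype.card_fin] at this ⊢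
    omega
  have hpow : 2 ^ n = 16 * 2 ^ (n - 4) := by
    rw [← Nat.sub_add_cancel hn, pow_add, Nat.add_sub_cancel]; ring
  have hpos := Nat.one_le_two_pow (n := n - 4)
  obtain ⟨e₁, h, e₂, he₁, hh, he₂, hF⟩ := exists_fixMid_fixFst_fixMid (f ∘ Φ.symm)
    (fun r => by
      rw [card_cellType_eq_edgeProfile]
      rcases r with ⟨_ | _, _ | _⟩ <;> simp [profile, edgeProfile_false_false j hf])
    (by have := card_eq_edgeProfile f j; omega) (by omega) (by rw [Nat.even_iff]; omega) hgood
  set Ψ := Φ.trans swapFst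
  have hΨ : ∀ x, Ψ (flipBit j x) = (!x j, (Ψ x).2) := fun x => by
    simp only [Ψ, trans_apply, Φ, splitBits_flipBit_right]; rfl
  refine ⟨doublePerm Φ h, doublePerm_mem_AC Φ (fun _ => rfl) (splitBits_flipBit_left hij) h hh,
    doublePerm Ψ e₁, doublePerm_mem_AC Ψ (fun _ => rfl) hΨ e₁ he₁,
    doublePerm Ψ e₂, doublePerm_mem_AC Ψ (fun _ => rfl) hΨ e₂ he₂,
    by simp [sign_doublePerm], fun x => ?_⟩
  have hx : Φ (doublePerm Ψ e₁ (doublePerm Φ h (doublePerm Ψ e₂ x)))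
      = fixMid e₁ (fixFst h (fixMid e₂ (Φ x))) := by
    rw [doublePerm_trans_apply, doublePerm_apply, doublePerm_trans_apply]
    rfl
  have := hF (Φ x)
  rw [← hx, Function.comp_apply, symm_apply_apply] at this
  exact Bool.not_inj this

end GoodDirections

/-- Transforming an even permutation into an even controlled permutation using
three concurrently even blocks: at least `n - 2` choices of `r₂` work. -/
theorem prop_new1_even (n : ℕ) (hn : 4 ≤ n) (r1 : Fin n)
    (σ : Perm (Fin n → Bool)) (hσ : Perm.sign σ = 1) :
    n - 2 ≤ Set.ncard {r2 : Fin n | r2 ≠ r1 ∧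
      ∃ σ1 ∈ AC r1, ∃ π1 ∈ AC r2, ∃ π2 ∈ AC r2,
        Perm.sign (σ * π1 * σ1 * π2) = 1 ∧
        ∀ x, (σ * π1 * σ1 * π2) x r1 = x r1} := by
  set f : (Fin n → Bool) → Bool := fun x => !σ x r1
  have hgood : ({r1} ∪ {j | IsBadDirection f j})ᶜ ⊆ {r2 : Fin n | r2 ≠ r1 ∧
      ∃ σ1 ∈ AC r1, ∃ π1 ∈ AC r2, ∃ π2 ∈ AC r2,
        Perm.sign (σ * π1 * σ1 * π2) = 1 ∧ ∀ x, (σ * π1 * σ1 * π2) x r1 = x r1} := by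
    intro j hj
    obtain ⟨hjr, hjbad⟩ : j ≠ r1 ∧ ¬ IsBadDirection f j := by simpa using hj
    obtain ⟨σ₁, hσ₁, π₁, hπ₁, π₂, hπ₂, hsign, hfix⟩ :=
      exists_mem_AC_of_not_isBadDirection hn (Ne.symm hjr) σ hjbad
    exact ⟨hjr, σ₁, hσ₁, π₁, hπ₁, π₂, hπ₂, hsign.trans hσ, hfix⟩
  have hbad : {j | IsBadDirection f j}.ncard ≤ 1 := (Set.ncard_le_one_iff (Set.toFinite _)).2
    fun hj hj' => eq_of_isBadDirection hn (two_mul_card_not_apply σ r1) hj hj'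
  have hunion := Set.ncard_union_le {r1} {j | IsBadDirection f j}
  rw [Set.ncard_singleton] at hunion
  refine le_trans ?_ (Set.ncard_le_ncard hgood)
  rw [Set.ncard_compl, Nat.card_eq_fintype_card, Fintype.card_fin]
  omega
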